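/- Let c > 0 and let (μ_n) be a sequence of nonnegative reals with lim_{n→∞} μ_n/n = c. Then lim_{n→∞} (1/n²)·( log(n!) + Σ_{k=0}^{n−1} log γ_{μ_n}(k) − (n·μ_n + n²/2)·log n ) = −( 3/4 + (1/2)·log 2 + c·(3/2 + log 2) + c²·log(2c) − (c² + c + 1/4)·log(1 + 2c) ), where γ_μ(2m) = m!·Γ(m + μ + 1/2) and γ_μ(2m+1) = m!·Γ(m + μ + 3/2). -/

import Mathlib

open MeasureTheory Real Filter Topology

/-- `γ_μ(2m) = m!·Γ(m + μ + 1/2)` and `γ_μ(2m+1) = m!·Γ(m + μ + 3/2)`. -/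
noncomputable def gam (μ : ℝ) (k : ℕ) : ℝ :=
  if k % 2 = 0 then (Nat.factorial (k / 2) : ℝ) * Real.Gamma ((k / 2 : ℕ) + μ + 1 / 2)
  else (Nat.factorial (k / 2) : ℝ) * Real.Gamma ((k / 2 : ℕ) + μ + 3 / 2)

/-!
Write `f t = t log t - t` and `F t = t² log t / 2 - 3t²/4`, so that `F' = f` and `f' = log`.
Comparing sums of monotone functions with integrals gives `log m! = f (m + 1) + O(log m)` and,
through monotonicity of `Γ` on `[2, ∞)`, `log Γ(y) = f y + O(log y)`; hence
`log γ_μ(k) = f (k/2 + 1) + f (k/2 + μ + 1/2) + O(log (n + μ))` for `k < n`, and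
`∑_{k<n} f (k/2 + s) = 2 (F (n/2 + s) - F s) + O((n + μ) log (n + μ))`.
Since `F (n t) = n² F t + n² t² log n / 2`, the two main terms equal
`n² (φ (1/n) + φ ((μ + 1/2)/n))` plus `(nμ + n²/2) log n + (3n/2) log n`, where
`φ τ = 2 (F (τ + 1/2) - F τ)` is continuous on `ℝ`. All errors are `o(n²)` because `μ_n ~ c n`,
so the limit is `φ 0 + φ c`.
-/

open Set
open scoped Nat

theorem sum_le_sub_le_sum_of_hasDerivAt {G g : ℝ → ℝ} {x₀ : ℝ} {N : ℕ}
    (hG : ∀ x ∈ Icc x₀ (x₀ + N), HasDerivAt G (g x) x) (hg : MonotoneOn g (Icc x₀ (x₀ + N))) :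
    ∑ i ∈ Finset.range N, g (x₀ + i) ≤ G (x₀ + N) - G x₀ ∧
      G (x₀ + N) - G x₀ ≤ ∑ i ∈ Finset.range N, g (x₀ + ↑(i + 1)) := by
  have hle : x₀ ≤ x₀ + N := le_add_of_nonneg_right N.cast_nonneg
  rw [← intervalIntegral.integral_eq_sub_of_hasDerivAt (by rwa [uIcc_of_le hle])
    (MonotoneOn.intervalIntegrable (by rwa [uIcc_of_le hle]))]
  exact ⟨hg.sum_le_integral, hg.integral_le_sum⟩

noncomputable def logPrimitive (t : ℝ) : ℝ := t * log t - t

noncomputable def logPrimitive₂ (t : ℝ) : ℝ := t ^ 2 * log t / 2 - 3 * t ^ 2 / 4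

theorem hasDerivAt_logPrimitive {t : ℝ} (ht : t ≠ 0) : HasDerivAt logPrimitive (log t) t := by
  refine (((hasDerivAt_id t).mul (hasDerivAt_log ht)).sub (hasDerivAt_id t)).congr_deriv ?_
  simp [ht]

theorem hasDerivAt_logPrimitive₂ {t : ℝ} (ht : t ≠ 0) :
    HasDerivAt logPrimitive₂ (logPrimitive t) t := by
  refine ((((hasDerivAt_pow 2 t).mul (hasDerivAt_log ht)).div_const 2).sub
    (((hasDerivAt_pow 2 t).const_mul 3).div_const 4)).congr_deriv ?_
  rw [logPrimitive]
  field_simp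
  ring

theorem logPrimitive_sub_le {s t : ℝ} (hs : 0 < s) (ht : 0 < t) :
    logPrimitive t - logPrimitive s ≤ (t - s) * log t := by
  have h := log_le_sub_one_of_pos (div_pos ht hs)
  rw [log_div ht.ne' hs.ne', le_sub_iff_add_le, le_div_iff₀ hs] at h
  unfold logPrimitive
  linarith

theorem monotoneOn_logPrimitive : MonotoneOn logPrimitive (Ici 1) := fun s hs t ht hst => by
  have := logPrimitive_sub_le (zero_lt_one.trans_le ht) (zero_lt_one.trans_le hs)
  nlinarith [log_nonneg (mem_Ici.mp hs)]

theorem abs_logPrimitive_sub_le {s t : ℝ} (hs : 1 ≤ s) (hst : s ≤ t) :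
    |logPrimitive t - logPrimitive s| ≤ (t - s) * log t := by
  rw [abs_of_nonneg (sub_nonneg.mpr (monotoneOn_logPrimitive hs (hs.trans hst) hst))]
  exact logPrimitive_sub_le (by linarith) (by linarith)

theorem neg_one_le_logPrimitive {t : ℝ} (ht : 0 ≤ t) : -1 ≤ logPrimitive t := by
  unfold logPrimitive
  linarith [self_sub_one_le_mul_log ht]

theorem logPrimitive_le_mul_log {t X : ℝ} (ht : 1 ≤ t) (htX : t ≤ X) :
    logPrimitive t ≤ X * log X := by
  have h := mul_le_mul htX (log_le_log (by linarith) htX) (log_nonneg ht) (by linarith)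
  unfold logPrimitive
  linarith

@[fun_prop]
theorem continuous_logPrimitive₂ : Continuous logPrimitive₂ := by
  have : logPrimitive₂ = fun t => t * (t * log t) / 2 - 3 * t ^ 2 / 4 := by
    funext t; unfold logPrimitive₂; ring
  rw [this]
  fun_prop

theorem logPrimitive₂_mul {n t : ℝ} (hn : 0 < n) (ht : t ≠ 0) :
    logPrimitive₂ (n * t) = n ^ 2 * logPrimitive₂ t + n ^ 2 * t ^ 2 * log n / 2 := by
  unfold logPrimitive₂
  rw [log_mul hn.ne' ht]
  ring

noncomputable def logPrimitive₂HalfIncrement (τ : ℝ) : ℝ :=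
  2 * (logPrimitive₂ (τ + 1 / 2) - logPrimitive₂ τ)

theorem continuous_logPrimitive₂HalfIncrement : Continuous logPrimitive₂HalfIncrement := by
  unfold logPrimitive₂HalfIncrement
  fun_prop

theorem two_mul_logPrimitive₂_sub_eq {n s : ℝ} (hn : 0 < n) (hs : 0 < s) :
    2 * (logPrimitive₂ (n / 2 + s) - logPrimitive₂ s) =
      n ^ 2 * logPrimitive₂HalfIncrement (s / n) + (n ^ 2 / 4 + n * s) * log n := by
  have h₁ : n / 2 + s = n * (s / n + 1 / 2) := by field_simp; ring
  have h₂ : s = n * (s / n) := by field_simp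
  rw [h₁, logPrimitive₂_mul hn (by positivity), h₂, logPrimitive₂_mul hn (by positivity),
    ← h₂, logPrimitive₂HalfIncrement]
  field_simp
  ring

theorem logPrimitive₂HalfIncrement_zero_add {c : ℝ} (hc : 0 < c) :
    logPrimitive₂HalfIncrement 0 + logPrimitive₂HalfIncrement c =
      -(3 / 4 + (1 / 2) * log 2 + c * (3 / 2 + log 2)
        + c ^ 2 * log (2 * c) - (c ^ 2 + c + 1 / 4) * log (1 + 2 * c)) := by
  have h₁ : log (c + 1 / 2) = log (1 + 2 * c) - log 2 := by
    rw [← log_div (by positivity) two_ne_zero]; ring_nf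
  have h₂ : log (0 + 1 / 2) = - log 2 := by simp
  simp only [logPrimitive₂HalfIncrement, logPrimitive₂, h₁, h₂, log_mul two_ne_zero hc.ne']
  ring

theorem abs_sum_logPrimitive_half_sub_le {s : ℝ} (hs : 1 ≤ s) (N : ℕ) :
    |∑ k ∈ Finset.range N, logPrimitive (k / 2 + s)
        - 2 * (logPrimitive₂ (N / 2 + s) - logPrimitive₂ s)| ≤ logPrimitive (N / 2 + s) + 1 := by
  set g : ℝ → ℝ := fun x => logPrimitive (x / 2 + s)
  have hderiv : ∀ x ∈ Icc (0 : ℝ) (0 + N),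
      HasDerivAt (fun x => 2 * logPrimitive₂ (x / 2 + s)) (g x) x := fun x hx => by
    have := ((hasDerivAt_logPrimitive₂ (by linarith [hx.1] : x / 2 + s ≠ 0)).comp x
      (((hasDerivAt_id x).div_const 2).add_const s)).const_mul 2
    refine this.congr_deriv ?_
    simp only [g]
    ring
  have hmono : MonotoneOn g (Icc (0 : ℝ) (0 + N)) := fun x hx y hy hxy =>
    monotoneOn_logPrimitive (mem_Ici.mpr (by linarith [hx.1])) (mem_Ici.mpr (by linarith [hy.1]))
      (by linarith)
  obtain ⟨hlow, hupp⟩ := sum_le_sub_le_sum_of_hasDerivAt hderiv hmono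
  have htel : ∑ i ∈ Finset.range N, g (0 + ↑(i + 1))
      = ∑ i ∈ Finset.range N, g (0 + i) + g N - g 0 := by
    have := Finset.sum_range_sub (fun i : ℕ => g i) N
    simp only [zero_add, Nat.cast_add, Nat.cast_one, Nat.cast_zero, Finset.sum_sub_distrib]
      at this ⊢
    linarith
  simp only [zero_add, g, zero_div] at hlow hupp htel ⊢
  rw [abs_sub_comm, abs_of_nonneg (by linarith)]
  linarith [neg_one_le_logPrimitive (by linarith : (0 : ℝ) ≤ s)]

theorem log_factorial_eq_sum (m : ℕ) : log m ! = ∑ i ∈ Finset.range m, log (1 + i) := by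
  rw [← Finset.prod_range_add_one_eq_factorial, Nat.cast_prod, log_prod (fun i _ => by positivity)]
  push_cast
  simp [add_comm]

theorem log_factorial_le_logPrimitive_add_one_le (m : ℕ) :
    log m ! ≤ logPrimitive (m + 1) + 1 ∧ logPrimitive (m + 1) + 1 ≤ log m ! + log (m + 1) := by
  have hderiv : ∀ x ∈ Icc (1 : ℝ) (1 + m), HasDerivAt logPrimitive (log x) x :=
    fun x hx => hasDerivAt_logPrimitive (by linarith [hx.1])
  have hmono : MonotoneOn log (Icc (1 : ℝ) (1 + m)) := fun x hx y _ hxy =>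
    log_le_log (by linarith [hx.1]) hxy
  obtain ⟨hlow, hupp⟩ := sum_le_sub_le_sum_of_hasDerivAt hderiv hmono
  have hsucc : log (m + 1)! = ∑ i ∈ Finset.range m, log (1 + ↑(i + 1)) := by
    rw [log_factorial_eq_sum, Finset.sum_range_succ']
    simp
  rw [Nat.factorial_succ, Nat.cast_mul, log_mul (by positivity) (by positivity)] at hsucc
  have h₁ : logPrimitive 1 = -1 := by simp [logPrimitive]
  rw [← log_factorial_eq_sum, h₁, add_comm (1 : ℝ)] at hlow
  rw [h₁, add_comm (1 : ℝ)] at hupp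
  push_cast at hsucc hupp
  constructor <;> linarith

theorem abs_log_factorial_sub_le (m : ℕ) :
    |log m ! - logPrimitive (m + 1)| ≤ 1 + log (m + 1) := by
  obtain ⟨h₁, h₂⟩ := log_factorial_le_logPrimitive_add_one_le m
  rw [abs_le]
  constructor <;> linarith [log_nonneg (by linarith [m.cast_nonneg (α := ℝ)] : (1 : ℝ) ≤ m + 1)]

theorem abs_log_Gamma_sub_le {y : ℝ} (hy : 2 ≤ y) :
    |log (Gamma y) - logPrimitive y| ≤ 1 + 2 * log (y + 1) := by
  have hfloor : 2 ≤ ⌊y⌋₊ := Nat.le_floor (by exact_mod_cast hy)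
  obtain ⟨j, hj⟩ : ∃ j : ℕ, ⌊y⌋₊ = j + 1 := ⟨⌊y⌋₊ - 1, by omega⟩
  have hj₁ : (1 : ℝ) ≤ j := by exact_mod_cast (by omega : 1 ≤ j)
  have hjy : (j : ℝ) + 1 ≤ y := by exact_mod_cast hj ▸ Nat.floor_le (by linarith)
  have hyj : y ≤ j + 1 + 1 := by
    have := Nat.lt_floor_add_one y
    rw [hj] at this
    push_cast at this
    linarith
  have hGamma_low : (j ! : ℝ) ≤ Gamma y := by
    rw [← Gamma_nat_eq_factorial]
    exact Gamma_strictMonoOn_Ici.monotoneOn (mem_Ici.mpr (by linarith))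
      (mem_Ici.mpr (by linarith)) hjy
  have hGamma_upp : Gamma y ≤ ((j + 1) ! : ℝ) := by
    rw [← Gamma_nat_eq_factorial]
    exact Gamma_strictMonoOn_Ici.monotoneOn (mem_Ici.mpr (by linarith))
      (mem_Ici.mpr (by push_cast; linarith)) (by push_cast; linarith)
  have hlog_low := log_le_log (by positivity) hGamma_low
  have hlog_upp := log_le_log (Gamma_pos_of_pos (by linarith)) hGamma_upp
  obtain ⟨-, hfact_low⟩ := log_factorial_le_logPrimitive_add_one_le j
  obtain ⟨hfact_upp, -⟩ := log_factorial_le_logPrimitive_add_one_le (j + 1)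
  push_cast at hfact_upp
  have hshift_low : logPrimitive y - logPrimitive (j + 1) ≤ log y :=
    (logPrimitive_sub_le (by positivity) (by linarith)).trans
      (mul_le_of_le_one_left (log_nonneg (by linarith)) (by linarith))
  have hshift_upp : logPrimitive (j + 1 + 1) - logPrimitive y ≤ log (j + 1 + 1) :=
    (logPrimitive_sub_le (by linarith) (by positivity)).trans
      (mul_le_of_le_one_left (log_nonneg (by linarith)) (by linarith))
  have hlog₁ : log (j + 1) ≤ log (y + 1) := log_le_log (by linarith) (by linarith)
  have hlog₂ : log y ≤ log (y + 1) := log_le_log (by linarith) (by linarith)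
  have hlog₃ : log (j + 1 + 1) ≤ log (y + 1) := log_le_log (by linarith) (by linarith)
  rw [abs_le]
  constructor <;> linarith [log_nonneg (by linarith : (1 : ℝ) ≤ j + 1)]

theorem gam_two_mul (μ : ℝ) (m : ℕ) : gam μ (2 * m) = m ! * Gamma (m + μ + 1 / 2) := by
  simp [gam]

theorem gam_two_mul_add_one (μ : ℝ) (m : ℕ) :
    gam μ (2 * m + 1) = m ! * Gamma (m + μ + 3 / 2) := by
  simp [gam, show (2 * m + 1) / 2 = m by omega]

theorem abs_log_gam_sub_le {μ : ℝ} (hμ : 3 / 2 ≤ μ) (k : ℕ) :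
    |log (gam μ k) - (logPrimitive (k / 2 + 1) + logPrimitive (k / 2 + μ + 1 / 2))|
      ≤ 2 + 4 * log (k + μ + 2) := by
  have hm₀ : ∀ m : ℕ, (0 : ℝ) ≤ m := fun m => m.cast_nonneg
  obtain ⟨m, rfl | rfl⟩ := Nat.even_or_odd' k
  · have hGamma := Gamma_pos_of_pos (by linarith [hm₀ m] : (0 : ℝ) < m + μ + 1 / 2)
    rw [gam_two_mul, log_mul (by positivity) hGamma.ne', show ((2 * m : ℕ) : ℝ) / 2 = m by
      push_cast; ring]
    have h₁ := abs_log_factorial_sub_le m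
    have h₂ := abs_log_Gamma_sub_le (y := m + μ + 1 / 2) (by linarith [hm₀ m])
    have hL₁ : log (m + 1) ≤ log ((2 * m : ℕ) + μ + 2) :=
      log_le_log (by linarith [hm₀ m]) (by push_cast; linarith [hm₀ m])
    have hL₂ : log (m + μ + 1 / 2 + 1) ≤ log ((2 * m : ℕ) + μ + 2) :=
      log_le_log (by linarith [hm₀ m]) (by push_cast; linarith [hm₀ m])
    rw [abs_le] at h₁ h₂ ⊢
    constructor <;> linarith [log_nonneg (by linarith [hm₀ m] : (1 : ℝ) ≤ m + 1)]
  · have hGamma := Gamma_pos_of_pos (by linarith [hm₀ m] : (0 : ℝ) < m + μ + 3 / 2)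
    rw [gam_two_mul_add_one, log_mul (by positivity) hGamma.ne',
      show ((2 * m + 1 : ℕ) : ℝ) / 2 = m + 1 / 2 by push_cast; ring]
    have h₁ := abs_log_factorial_sub_le m
    have h₂ := abs_log_Gamma_sub_le (y := m + μ + 3 / 2) (by linarith [hm₀ m])
    have h₃ := abs_logPrimitive_sub_le (s := m + 1) (t := m + 1 / 2 + 1)
      (by linarith [hm₀ m]) (by linarith)
    have h₄ := abs_logPrimitive_sub_le (s := m + 1 / 2 + μ + 1 / 2) (t := m + μ + 3 / 2)
      (by linarith [hm₀ m]) (by linarith)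
    have hL : ∀ x : ℝ, 0 < x → x ≤ m + μ + 3 / 2 + 1 → log x ≤ log ((2 * m + 1 : ℕ) + μ + 2) :=
      fun x hx hxle => log_le_log hx (by push_cast; linarith [hm₀ m])
    have hL₁ := hL (m + 1) (by linarith [hm₀ m]) (by linarith)
    have hL₂ := hL (m + μ + 3 / 2 + 1) (by linarith [hm₀ m]) le_rfl
    have hL₃ := hL (m + 1 / 2 + 1) (by linarith [hm₀ m]) (by linarith)
    have hL₄ := hL (m + μ + 3 / 2) (by linarith [hm₀ m]) (by linarith)
    have hlog₀ := log_nonneg (by linarith [hm₀ m] : (1 : ℝ) ≤ m + 1)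
    have hlog₁ := log_nonneg (by linarith [hm₀ m] : (1 : ℝ) ≤ m + 1 / 2 + 1)
    have hlog₂ := log_nonneg (by linarith [hm₀ m] : (1 : ℝ) ≤ m + μ + 3 / 2)
    rw [abs_le] at h₁ h₂ h₃ h₄ ⊢
    constructor <;> linarith

theorem abs_sum_log_gam_sub_le {μ : ℝ} (hμ : 3 / 2 ≤ μ) (n : ℕ) :
    |∑ k ∈ Finset.range n, log (gam μ k) - 2 * (logPrimitive₂ (n / 2 + 1) - logPrimitive₂ 1)
        - 2 * (logPrimitive₂ (n / 2 + (μ + 1 / 2)) - logPrimitive₂ (μ + 1 / 2))|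
      ≤ 6 * ((n + μ + 2) * (1 + log (n + μ + 2))) := by
  set X : ℝ := n + μ + 2
  have hn₀ : (0 : ℝ) ≤ n := n.cast_nonneg
  have hlogX := log_nonneg (by linarith : (1 : ℝ) ≤ X)
  have hterms : |∑ k ∈ Finset.range n, (log (gam μ k)
      - (logPrimitive (k / 2 + 1) + logPrimitive (k / 2 + (μ + 1 / 2))))|
        ≤ n * (2 + 4 * log X) := by
    refine (Finset.abs_sum_le_sum_abs _ _).trans
      ((Finset.sum_le_card_nsmul _ _ (2 + 4 * log X) fun k hk => ?_).trans (by simp [mul_add]))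
    have hk : (k : ℝ) ≤ n := by exact_mod_cast (Finset.mem_range.mp hk).le
    rw [← add_assoc]
    exact (abs_log_gam_sub_le hμ k).trans (by gcongr; linarith)
  have h₁ := abs_sum_logPrimitive_half_sub_le le_rfl n
  have h₂ := abs_sum_logPrimitive_half_sub_le (s := μ + 1 / 2) (by linarith) n
  have hf₁ := logPrimitive_le_mul_log (t := n / 2 + 1) (X := X) (by linarith) (by linarith)
  have hf₂ := logPrimitive_le_mul_log (t := n / 2 + (μ + 1 / 2)) (X := X) (by linarith)
    (by linarith)
  have hnX : n * log X ≤ X * log X := mul_le_mul_of_nonneg_right (by linarith) hlogX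
  rw [Finset.sum_sub_distrib, Finset.sum_add_distrib] at hterms
  rw [abs_le] at hterms h₁ h₂ ⊢
  constructor <;> linarith

theorem abs_log_factorial_add_sum_log_gam_sub_le {μ : ℝ} (hμ : 3 / 2 ≤ μ) {n : ℕ} (hn : 0 < n) :
    |log n ! + ∑ k ∈ Finset.range n, log (gam μ k) - (n * μ + n ^ 2 / 2) * log n
        - n ^ 2 * (logPrimitive₂HalfIncrement (1 / n)
          + logPrimitive₂HalfIncrement ((μ + 1 / 2) / n))|
      ≤ 9 * ((n + μ + 2) * (1 + log (n + μ + 2))) := by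
  have hn₁ : (1 : ℝ) ≤ n := by exact_mod_cast hn
  have hsum := abs_sum_log_gam_sub_le hμ n
  rw [two_mul_logPrimitive₂_sub_eq (by positivity) one_pos,
    two_mul_logPrimitive₂_sub_eq (by positivity) (by positivity)] at hsum
  have hfact := (log_factorial_le_logPrimitive_add_one_le n).1
  have hfact₀ : 0 ≤ log n ! := log_natCast_nonneg _
  have hf := logPrimitive_le_mul_log (t := n + 1) (X := n + μ + 2) (by linarith) (by linarith)
  have hlog_n := mul_le_mul (by linarith : (n : ℝ) ≤ n + μ + 2)
    (log_le_log (by positivity) (by linarith : (n : ℝ) ≤ n + μ + 2)) (log_nonneg hn₁)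
    (by linarith)
  have hlog_n₀ : 0 ≤ n * log n := mul_nonneg (by positivity) (log_nonneg hn₁)
  have hlogX := log_nonneg (by linarith : (1 : ℝ) ≤ n + μ + 2)
  rw [abs_le] at hsum ⊢
  constructor <;> linarith

theorem tendsto_atTop_of_tendsto_div_natCast {x : ℕ → ℝ} {L : ℝ} (hL : 0 < L)
    (hx : Tendsto (fun n : ℕ => x n / n) atTop (𝓝 L)) : Tendsto x atTop atTop := by
  refine (hx.pos_mul_atTop hL tendsto_natCast_atTop_atTop).congr' ?_
  filter_upwards [eventually_ne_atTop 0] with n hn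
  field_simp

theorem tendsto_mul_one_add_log_div_sq {x : ℕ → ℝ} {L : ℝ} (hL : 0 < L)
    (hx : Tendsto (fun n : ℕ => x n / n) atTop (𝓝 L)) :
    Tendsto (fun n : ℕ => x n * (1 + log (x n)) / n ^ 2) atTop (𝓝 0) := by
  have hxtop := tendsto_atTop_of_tendsto_div_natCast hL hx
  have hlog : Tendsto (fun y : ℝ => (1 + log y) / y) atTop (𝓝 0) := by
    simpa [add_div] using tendsto_inv_atTop_zero.add isLittleO_log_id_atTop.tendsto_div_nhds_zero
  have := (hx.pow 2).mul (hlog.comp hxtop)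
  rw [mul_zero] at this
  refine this.congr' ?_
  filter_upwards [hxtop.eventually_gt_atTop 0] with n hxn
  simp only [Function.comp_apply]
  field_simp

theorem tendsto_one_div_sq_mul_of_abs_sub_le {u p E : ℕ → ℝ} {ℓ : ℝ}
    (hp : Tendsto p atTop (𝓝 ℓ)) (hE : Tendsto (fun n : ℕ => E n / n ^ 2) atTop (𝓝 0))
    (hu : ∀ᶠ n : ℕ in atTop, |u n - n ^ 2 * p n| ≤ E n) :
    Tendsto (fun n : ℕ => 1 / (n : ℝ) ^ 2 * u n) atTop (𝓝 ℓ) := by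
  refine hp.congr_dist (squeeze_zero' (.of_forall fun n => dist_nonneg) ?_ hE)
  filter_upwards [hu, eventually_gt_atTop 0] with n hun hn
  have hn₂ : (0 : ℝ) < (n : ℝ) ^ 2 := by positivity
  rw [dist_comm, Real.dist_eq, show 1 / (n : ℝ) ^ 2 * u n - p n = (u n - n ^ 2 * p n) / n ^ 2 by
    field_simp, abs_div, abs_of_pos hn₂]
  exact div_le_div_of_nonneg_right hun hn₂.le

theorem stmt_16 (c : ℝ) (hc : 0 < c) (μ : ℕ → ℝ)
    (hlim : Filter.Tendsto (fun n => μ n / n) Filter.atTop (nhds c)) :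
    Filter.Tendsto
      (fun n : ℕ => (1 / (n : ℝ) ^ 2) *
        (Real.log (Nat.factorial n) + (∑ k ∈ Finset.range n, Real.log (gam (μ n) k))
          - ((n : ℝ) * μ n + (n : ℝ) ^ 2 / 2) * Real.log n))
      Filter.atTop
      (nhds (-(3 / 4 + (1 / 2) * Real.log 2 + c * (3 / 2 + Real.log 2)
        + c ^ 2 * Real.log (2 * c) - (c ^ 2 + c + 1 / 4) * Real.log (1 + 2 * c)))) := by
  have hX : Tendsto (fun n : ℕ => (n + μ n + 2) / n) atTop (𝓝 (1 + c)) := by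
    have := tendsto_const_nhds (x := (1 : ℝ)).add
      (hlim.add (tendsto_const_div_atTop_nhds_zero_nat 2))
    rw [add_zero] at this
    refine this.congr' ?_
    filter_upwards [eventually_ne_atTop 0] with n hn
    field_simp
    ring
  have hτ : Tendsto (fun n : ℕ => (μ n + 1 / 2) / n) atTop (𝓝 c) := by
    simpa only [add_zero, add_div] using hlim.add (tendsto_const_div_atTop_nhds_zero_nat (1 / 2))
  rw [← logPrimitive₂HalfIncrement_zero_add hc]
  refine tendsto_one_div_sq_mul_of_abs_sub_le
    (E := fun n => 9 * ((n + μ n + 2) * (1 + log (n + μ n + 2))))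
    (((continuous_logPrimitive₂HalfIncrement.tendsto 0).comp
      tendsto_one_div_atTop_nhds_zero_nat).add
      ((continuous_logPrimitive₂HalfIncrement.tendsto c).comp hτ))
    (by simpa only [mul_div_assoc, mul_zero] using
      (tendsto_mul_one_add_log_div_sq (by positivity) hX).const_mul 9) ?_
  filter_upwards [(tendsto_atTop_of_tendsto_div_natCast hc hlim).eventually_ge_atTop (3 / 2),
    eventually_gt_atTop 0] with n hμn hn
  exact abs_log_factorial_add_sum_log_gam_sub_le hμn hn
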